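/- arXiv:1807.05928 — 2 statements merged into one kernel-verified Lean document; each statement's English description precedes it below -/
import Mathlib

section
/- Let V = V₊ ⊕ V₀ ⊕ V₋ be a finite-dimensional complex ℂ*-representation decomposed into the sums of weight spaces of positive, zero and negative weights respectively. Let Z ⊂ V be a closed ℂ*-invariant subset with 0 ∈ Z, and suppose there is a sequence of points z_n = (z_{n,+}, z_{n,0}, z_{n,-}) ∈ Z with z_{n,-} ≠ 0 for all n and z_n → 0. Then Z contains a nonzero point of V₋, namely a point of norm 1 lying in Z ∩ V₋. -/
/-!
Rescaling by a real `s ∈ (0, 1]` enlarges the coordinates of negative weight and shrinks all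
others. For each `z_k` in the unit ball, the intermediate value theorem gives `s_k` with
`‖(s_k • z_k)₋‖ = 1`, while the other coordinates of `s_k • z_k` stay below those of `z_k` and
hence tend to `0`. The rescaled sequence is bounded, so a subsequence converges; as `Z` is closed
and invariant, its limit is a point of `Z ∩ V₋` of norm `1`.
-/

open Filter Topology Finset

section

variable {ι : Type*} (w : ι → ℤ)

noncomputable def weightSMul (t : ℂ) (x : EuclideanSpace ℂ ι) : EuclideanSpace ℂ ι :=
  WithLp.toLp 2 (fun i => t ^ w i * x i)

lemma norm_weightSMul_apply (t : ℂ) (x : EuclideanSpace ℂ ι) (i : ι) :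
    ‖weightSMul w t x i‖ = ‖t‖ ^ w i * ‖x i‖ := by
  simp [weightSMul]

lemma weightSMul_one (x : EuclideanSpace ℂ ι) : weightSMul w 1 x = x := by
  simp [weightSMul]

lemma norm_weightSMul_apply_le {s : ℝ} (hs0 : 0 < s) (hs1 : s ≤ 1) (x : EuclideanSpace ℂ ι)
    {i : ι} (hi : 0 ≤ w i) : ‖weightSMul w s x i‖ ≤ ‖x i‖ := by
  rw [norm_weightSMul_apply, Complex.norm_real, Real.norm_of_nonneg hs0.le]
  exact mul_le_of_le_one_left (norm_nonneg _) (zpow_le_one₀ hs0 hs1 hi)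

lemma continuousOn_weightSMul (x : EuclideanSpace ℂ ι) :
    ContinuousOn (fun t : ℂ => weightSMul w t x) {0}ᶜ := by
  unfold weightSMul
  fun_prop (disch := aesop)

variable [Fintype ι]

/-- `‖x₋‖²`, where `x₋` is the `V₋`-component of `x`. -/
noncomputable def negPartNormSq (x : EuclideanSpace ℂ ι) : ℝ :=
  ∑ i with w i < 0, ‖x i‖ ^ 2

lemma norm_sq_eq_negPartNormSq_add (x : EuclideanSpace ℂ ι) :
    ‖x‖ ^ 2 = negPartNormSq w x + ∑ i with 0 ≤ w i, ‖x i‖ ^ 2 := by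
  simp only [EuclideanSpace.norm_sq_eq, negPartNormSq, ← not_lt]
  exact (sum_filter_add_sum_filter_not _ _ _).symm

lemma negPartNormSq_le (x : EuclideanSpace ℂ ι) : negPartNormSq w x ≤ ‖x‖ ^ 2 := by
  rw [norm_sq_eq_negPartNormSq_add w x]
  exact le_add_of_nonneg_right (sum_nonneg fun i _ => by positivity)

lemma continuous_negPartNormSq : Continuous (negPartNormSq w : EuclideanSpace ℂ ι → ℝ) := by
  unfold negPartNormSq
  fun_prop

lemma exists_negPartNormSq_weightSMul_eq_one {x : EuclideanSpace ℂ ι}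
    (hx : negPartNormSq w x ≤ 1) {i₀ : ι} (hi₀ : w i₀ < 0) (hxi₀ : x i₀ ≠ 0) :
    ∃ s : ℝ, 0 < s ∧ s ≤ 1 ∧ negPartNormSq w (weightSMul w s x) = 1 := by
  set s₀ := min 1 ‖x i₀‖
  have hs₀ : 0 < s₀ := lt_min one_pos (norm_pos_iff.2 hxi₀)
  have hs₀1 : s₀ ≤ 1 := min_le_left _ _
  -- `s₀ ≤ ‖x i₀‖` and `s₀ ^ w i₀ ≥ s₀⁻¹` push the coordinate `i₀` out of the unit ball
  have hi₀_large : 1 ≤ ‖weightSMul w s₀ x i₀‖ := by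
    rw [norm_weightSMul_apply, Complex.norm_real, Real.norm_of_nonneg hs₀.le]
    calc 1 = s₀ ^ (-1 : ℤ) * s₀ := by simp [hs₀.ne']
      _ ≤ s₀ ^ w i₀ * ‖x i₀‖ :=
        mul_le_mul (zpow_le_zpow_right_of_le_one₀ hs₀ hs₀1 (by omega)) (min_le_right _ _)
          hs₀.le (by positivity)
  have h_large : 1 ≤ negPartNormSq w (weightSMul w s₀ x) :=
    (one_le_pow₀ hi₀_large).trans <| single_le_sum (f := fun i => ‖weightSMul w s₀ x i‖ ^ 2)
      (fun i _ => by positivity) (mem_filter.2 ⟨mem_univ _, hi₀⟩)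
  have hcont : ContinuousOn (fun s : ℝ => negPartNormSq w (weightSMul w s x)) (Set.Icc s₀ 1) :=
    (continuous_negPartNormSq w).comp_continuousOn <|
      (continuousOn_weightSMul w x).comp Complex.continuous_ofReal.continuousOn
        fun s hs => by simpa using (hs₀.trans_le hs.1).ne'
  obtain ⟨s, hs, hs_eq⟩ := intermediate_value_Icc' hs₀1 hcont
    ⟨by simpa [weightSMul_one] using hx, h_large⟩
  exact ⟨s, hs₀.trans_le hs.1, hs.2, hs_eq⟩

lemma norm_sq_weightSMul_le {s : ℝ} (hs0 : 0 < s) (hs1 : s ≤ 1) (x : EuclideanSpace ℂ ι) :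
    ‖weightSMul w s x‖ ^ 2 ≤ negPartNormSq w (weightSMul w s x) + ‖x‖ ^ 2 := by
  rw [norm_sq_eq_negPartNormSq_add w (weightSMul w s x), norm_sq_eq_negPartNormSq_add w x]
  gcongr
  refine le_add_of_nonneg_of_le (sum_nonneg fun i _ => by positivity) (sum_le_sum fun i hi => ?_)
  gcongr
  exact norm_weightSMul_apply_le w hs0 hs1 x (mem_filter.1 hi).2

lemma exists_mem_norm_eq_one_of_tendsto_nonneg_coord {Z : Set (EuclideanSpace ℂ ι)}
    (hZ : IsClosed Z) {v : ℕ → EuclideanSpace ℂ ι} (hvZ : ∀ k, v k ∈ Z)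
    (hv : ∀ k, negPartNormSq w (v k) = 1) {C : ℝ} (hvC : ∀ k, ‖v k‖ ≤ C)
    (hv0 : ∀ i, 0 ≤ w i → Tendsto (fun k => v k i) atTop (𝓝 0)) :
    ∃ a ∈ Z, ‖a‖ = 1 ∧ ∀ i, 0 ≤ w i → a i = 0 := by
  obtain ⟨a, -, φ, hφ, hva⟩ := (isCompact_closedBall (0 : EuclideanSpace ℂ ι) C).tendsto_subseq
    fun k => mem_closedBall_zero_iff.2 (hvC k)
  have ha0 : ∀ i, 0 ≤ w i → a i = 0 := fun i hi =>
    tendsto_nhds_unique (((PiLp.continuous_apply 2 _ i).tendsto a).comp hva)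
      ((hv0 i hi).comp hφ.tendsto_atTop)
  have ha1 : negPartNormSq w a = 1 :=
    tendsto_nhds_unique (((continuous_negPartNormSq w).tendsto a).comp hva)
      (by simp [Function.comp_def, hv])
  have ha_sq : ‖a‖ ^ 2 = 1 := by
    rw [norm_sq_eq_negPartNormSq_add, ha1, add_eq_left]
    exact sum_eq_zero fun i hi => by simp [ha0 i (mem_filter.1 hi).2]
  refine ⟨a, hZ.mem_of_tendsto hva (Eventually.of_forall fun k => hvZ (φ k)), ?_, ha0⟩
  exact (pow_eq_one_iff_of_nonneg (norm_nonneg _) two_ne_zero).1 ha_sq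

end

theorem closed_invariant_set_meets_negative_part_general
    {n : ℕ} (w : Fin n → ℤ) (Z : Set (EuclideanSpace ℂ (Fin n)))
    (hZclosed : IsClosed Z)
    (hZinv : ∀ (t : ℂˣ), ∀ v ∈ Z,
      (WithLp.toLp 2 (fun i => (t : ℂ) ^ (w i) * v i) : EuclideanSpace ℂ (Fin n)) ∈ Z)
    (z : ℕ → EuclideanSpace ℂ (Fin n)) (hz : ∀ k, z k ∈ Z)
    (hneg : ∀ k, ∃ i, w i < 0 ∧ z k i ≠ 0)
    (hlim : Tendsto z atTop (nhds 0)) :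
    ∃ v ∈ Z, ‖v‖ = 1 ∧ ∀ i, 0 ≤ w i → v i = 0 := by
  obtain ⟨N, hN⟩ := eventually_atTop.1 (hlim.eventually (Metric.closedBall_mem_nhds 0 one_pos))
  have hz1 (k : ℕ) : ‖z (k + N)‖ ≤ 1 := mem_closedBall_zero_iff.1 (hN _ (Nat.le_add_left N k))
  choose s hs0 hs1 hs using fun k =>
    have ⟨i, hi, hzi⟩ := hneg (k + N)
    exists_negPartNormSq_weightSMul_eq_one w
      ((negPartNormSq_le w _).trans (pow_le_one₀ (norm_nonneg _) (hz1 k))) hi hzi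
  set v := fun k => weightSMul w (s k) (z (k + N))
  have hvZ (k : ℕ) : v k ∈ Z :=
    hZinv (Units.mk0 _ (Complex.ofReal_ne_zero.2 (hs0 k).ne')) _ (hz _)
  have hv_bdd (k : ℕ) : ‖v k‖ ≤ 2 := by
    have := norm_sq_weightSMul_le w (hs0 k) (hs1 k) (z (k + N))
    rw [hs k] at this
    nlinarith [hz1 k, norm_nonneg (z (k + N)), norm_nonneg (v k)]
  have hv0 (i : Fin n) (hi : 0 ≤ w i) : Tendsto (fun k => v k i) atTop (𝓝 0) := by
    have hzi : Tendsto (fun k => z (k + N) i) atTop (𝓝 0) := by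
      simpa [Function.comp_def] using
        ((PiLp.continuous_apply 2 _ i).tendsto 0).comp (hlim.comp (tendsto_add_atTop_nat N))
    exact squeeze_zero_norm (fun k => norm_weightSMul_apply_le w (hs0 k) (hs1 k) _ hi)
      (tendsto_zero_iff_norm_tendsto_zero.1 hzi)
  exact exists_mem_norm_eq_one_of_tendsto_nonneg_coord w hZclosed hvZ hs hv_bdd hv0

/-- Let `V = ℂⁿ` be a `ℂ*`-representation in which `t ∈ ℂ*` acts on the
`i`-th coordinate with weight `w i ∈ ℤ` (so `V₊`, `V₀`, `V₋` are the coordinates with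
positive, zero, negative weight). Let `Z ⊆ V` be a closed `ℂ*`-invariant subset containing
`0`, and suppose there is a sequence `z_k ∈ Z` converging to `0` whose negative-weight part
is nonzero for all `k`. Then `Z` contains a point of norm `1` lying in `V₋`. -/
theorem closed_invariant_set_meets_negative_part
    {n : ℕ} (w : Fin n → ℤ) (Z : Set (EuclideanSpace ℂ (Fin n)))
    (hZclosed : IsClosed Z)
    (hZinv : ∀ (t : ℂˣ), ∀ v ∈ Z,
      (WithLp.toLp 2 (fun i => (t : ℂ) ^ (w i) * v i) : EuclideanSpace ℂ (Fin n)) ∈ Z)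
    (hZ0 : (0 : EuclideanSpace ℂ (Fin n)) ∈ Z)
    (z : ℕ → EuclideanSpace ℂ (Fin n)) (hz : ∀ k, z k ∈ Z)
    (hneg : ∀ k, ∃ i, w i < 0 ∧ z k i ≠ 0)
    (hlim : Tendsto z atTop (nhds 0)) :
    ∃ v ∈ Z, ‖v‖ = 1 ∧ ∀ i, 0 ≤ w i → v i = 0 :=
  closed_invariant_set_meets_negative_part_general w Z hZclosed hZinv z hz hneg hlim
end

section
/- Let A be an abelian category, and let 0 → E₁ →^j E →^p E₂ → 0 be an extension with class ξ ∈ Ext¹(E₂, E₁), and let 0 → E₁ →^α E₀ →^β E₂ → 0 be a split extension with chosen section s : E₂ → E₀ of β and retraction r : E₀ → E₁ of α. Then the extension 0 → E₀ →^{γ} E₀ ⊕ E →^{δ} E₀ → 0 with γ = (s∘β, j∘r) and δ = (α∘r, s∘p) represents the class β*(α_*(ξ)) ∈ Ext¹(E₀, E₀). -/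
/-!
The data `r, s` is a splitting of `0 → E₁ → E₀ → E₂ → 0`. The maps `α`, `(s ∘ p, 𝟙)` and `s` form
a morphism from the extension `(j, p)` to the middle sequence, so by naturality of extension
classes `s^*` of the middle class is `α_* ξ`. Pulling back along `𝟙 = α ∘ r + s ∘ β` then gives
the claim, because `α ∘ r = δ ∘ inl` factors through `δ`, and pulling back along `δ` kills the
class of the sequence it ends.
-/

open CategoryTheory Abelian Limits

universe v u w

namespace CategoryTheory.ShortComplex.Splitting

variable {C : Type u} [Category.{v} C] [Abelian C] {S : ShortComplex C} (σ : S.Splitting)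
  {E : C} {j : S.X₁ ⟶ E} {p : E ⟶ S.X₃}

lemma mono_biprod_lift [Mono j] : Mono (biprod.lift (S.g ≫ σ.s) (σ.r ≫ j)) := by
  refine Preadditive.mono_of_cancel_zero _ fun t ht => ?_
  have hr : t ≫ σ.r = 0 := by
    simpa [← cancel_mono j] using ht =≫ biprod.snd
  have hg : t ≫ S.g = 0 := by
    simpa using ht =≫ biprod.fst ≫ S.g
  rw [← Category.comp_id t, ← σ.id]
  simp [reassoc_of% hr, reassoc_of% hg]

lemma epi_biprod_desc [Epi p] : Epi (biprod.desc (σ.r ≫ S.f) (p ≫ σ.s)) := by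
  refine Preadditive.epi_of_cancel_zero _ fun t ht => ?_
  have hs : σ.s ≫ t = 0 := by
    simpa [← cancel_epi p] using biprod.inr ≫= ht
  have hf : S.f ≫ t = 0 := by
    simpa using S.f ≫= biprod.inl ≫= ht
  rw [← Category.id_comp t, ← σ.id]
  simp [hs, hf]

lemma biprod_lift_comp_desc_eq_zero (w : j ≫ p = 0) :
    biprod.lift (S.g ≫ σ.s) (σ.r ≫ j) ≫ biprod.desc (σ.r ≫ S.f) (p ≫ σ.s) = 0 := by
  simp [σ.s_r_assoc, reassoc_of% w]

lemma exact_biprod_lift_desc {w : j ≫ p = 0} (h : (ShortComplex.mk j p w).Exact) :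
    (ShortComplex.mk _ _ (σ.biprod_lift_comp_desc_eq_zero w)).Exact := by
  rw [ShortComplex.exact_iff_exact_up_to_refinements]
  intro A x hx
  have hdesc_g : biprod.desc (σ.r ≫ S.f) (p ≫ σ.s) ≫ S.g = biprod.snd ≫ p := by
    ext <;> simp
  have hdesc_r : biprod.desc (σ.r ≫ S.f) (p ≫ σ.s) ≫ σ.r = biprod.fst ≫ σ.r := by
    ext <;> simp [σ.s_r]
  have hp : (x ≫ biprod.snd) ≫ p = 0 := by
    simpa [hdesc_g] using hx =≫ S.g
  have hr : (x ≫ biprod.fst) ≫ σ.r = 0 := by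
    simpa [hdesc_r] using hx =≫ σ.r
  obtain ⟨A', π, hπ, y, hy⟩ := h.exact_up_to_refinements (x ≫ biprod.snd) hp
  refine ⟨A', π, hπ, π ≫ x ≫ biprod.fst + y ≫ S.f, biprod.hom_ext _ _ ?_ ?_⟩
  · simp [σ.g_s, reassoc_of% hr]
  · simp [reassoc_of% hr, ← hy]

lemma shortExact_biprod_lift_desc {w : j ≫ p = 0} (h : (ShortComplex.mk j p w).ShortExact) :
    (ShortComplex.mk _ _ (σ.biprod_lift_comp_desc_eq_zero w)).ShortExact :=
  have := h.mono_f
  have := h.epi_g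
  { exact := σ.exact_biprod_lift_desc h.exact
    mono_f := σ.mono_biprod_lift
    epi_g := σ.epi_biprod_desc }

noncomputable def toBiprodLiftDesc (w : j ≫ p = 0) :
    ShortComplex.mk j p w ⟶ ShortComplex.mk _ _ (σ.biprod_lift_comp_desc_eq_zero w) where
  τ₁ := S.f
  τ₂ := biprod.lift (p ≫ σ.s) (𝟙 E)
  τ₃ := σ.s
  comm₁₂ := by ext <;> simp [reassoc_of% w]
  comm₂₃ := by simp [σ.s_r_assoc]

lemma extClass_biprod_lift_desc [HasExt.{w} C] {w : j ≫ p = 0}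
    (h : (ShortComplex.mk j p w).ShortExact) :
    (σ.shortExact_biprod_lift_desc h).extClass =
      (Ext.mk₀ S.g).comp (h.extClass.comp (Ext.mk₀ S.f) (add_zero 1)) (zero_add 1) := by
  have h' := σ.shortExact_biprod_lift_desc h
  have hfirst : (Ext.mk₀ (σ.r ≫ S.f)).comp h'.extClass (zero_add 1) = 0 := by
    simpa [Ext.mk₀_comp_mk₀_assoc] using
      congrArg (fun e => (Ext.mk₀ biprod.inl).comp e (zero_add 1)) h'.comp_extClass
  calc h'.extClass = (Ext.mk₀ (σ.r ≫ S.f + S.g ≫ σ.s)).comp h'.extClass (zero_add 1) := by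
        rw [σ.id, Ext.mk₀_id_comp]
    _ = (Ext.mk₀ S.g).comp ((Ext.mk₀ σ.s).comp h'.extClass (zero_add 1)) (zero_add 1) := by
        rw [Ext.mk₀_add, Ext.add_comp, hfirst, zero_add, Ext.mk₀_comp_mk₀_assoc]
    _ = _ := congrArg (fun e => (Ext.mk₀ S.g).comp e (zero_add 1))
        (h.extClass_naturality h' (σ.toBiprodLiftDesc w)).symm

end CategoryTheory.ShortComplex.Splitting

theorem extension_class_of_pullback_pushforward_general
    {C : Type u} [Category.{v} C] [Abelian C] [HasExt.{w} C]
    {E₁ E E₂ E₀ : C}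
    (j : E₁ ⟶ E) (p : E ⟶ E₂) (wjp : j ≫ p = 0)
    (hse : (ShortComplex.mk j p wjp).ShortExact)
    (α : E₁ ⟶ E₀) (β : E₀ ⟶ E₂) (wαβ : α ≫ β = 0)
    (s : E₂ ⟶ E₀) (hs : s ≫ β = 𝟙 E₂)
    (r : E₀ ⟶ E₁) (hr : α ≫ r = 𝟙 E₁)
    (hdecomp : r ≫ α + β ≫ s = 𝟙 E₀) :
    ∃ (hw : (biprod.lift (β ≫ s) (r ≫ j) : E₀ ⟶ E₀ ⊞ E) ≫
        (biprod.desc (r ≫ α) (p ≫ s) : E₀ ⊞ E ⟶ E₀) = 0)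
      (hmid : (ShortComplex.mk (biprod.lift (β ≫ s) (r ≫ j))
        (biprod.desc (r ≫ α) (p ≫ s)) hw).ShortExact),
      hmid.extClass =
        (Ext.mk₀ β).comp (hse.extClass.comp (Ext.mk₀ α) (add_zero 1)) (zero_add 1) := by
  let σ : (ShortComplex.mk α β wαβ).Splitting := ⟨r, s, hr, hs, hdecomp⟩
  exact ⟨_, σ.shortExact_biprod_lift_desc hse, σ.extClass_biprod_lift_desc hse⟩

/-- Let `0 → E₁ →ʲ E →ᵖ E₂ → 0` be an extension with class
`ξ ∈ Ext¹(E₂, E₁)`, and let `0 → E₁ →^α E₀ →^β E₂ → 0` be a split extension with section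
`s` of `β` and induced retraction `r` of `α`. Then the sequence
`0 → E₀ →^γ E₀ ⊕ E →^δ E₀ → 0` with `γ = (s∘β, j∘r)` and `δ = (α∘r, s∘p)` is a short
exact sequence representing the class `β*(α_*(ξ)) ∈ Ext¹(E₀, E₀)`. -/
theorem extension_class_of_pullback_pushforward
    {C : Type u} [Category.{v} C] [Abelian C] [HasExt.{w} C]
    {E₁ E E₂ E₀ : C}
    (j : E₁ ⟶ E) (p : E ⟶ E₂) (wjp : j ≫ p = 0)
    (hse : (ShortComplex.mk j p wjp).ShortExact)
    (α : E₁ ⟶ E₀) (β : E₀ ⟶ E₂) (wαβ : α ≫ β = 0)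
    (hsplit : (ShortComplex.mk α β wαβ).ShortExact)
    (s : E₂ ⟶ E₀) (hs : s ≫ β = 𝟙 E₂)
    (r : E₀ ⟶ E₁) (hr : α ≫ r = 𝟙 E₁)
    (hsr : s ≫ r = 0) (hdecomp : r ≫ α + β ≫ s = 𝟙 E₀) :
    ∃ (hw : (biprod.lift (β ≫ s) (r ≫ j) : E₀ ⟶ E₀ ⊞ E) ≫
        (biprod.desc (r ≫ α) (p ≫ s) : E₀ ⊞ E ⟶ E₀) = 0)
      (hmid : (ShortComplex.mk (biprod.lift (β ≫ s) (r ≫ j))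
        (biprod.desc (r ≫ α) (p ≫ s)) hw).ShortExact),
      hmid.extClass =
        (Ext.mk₀ β).comp (hse.extClass.comp (Ext.mk₀ α) (add_zero 1)) (zero_add 1) :=
  extension_class_of_pullback_pushforward_general j p wjp hse α β wαβ s hs r hr hdecomp
end
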